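/- Consider two coupled queueing systems using static thresholds K^G ≥ K^L with common initial queue length q ≤ K^L. Then the difference of queue lengths satisfies Q^G(t) − Q^L(t) ≤ K^G − K^L for all t, and consequently every customer admitted to system L is also admitted to system G, almost surely. -/
import Mathlib


/-- Queue-length process of an admission-controlled queue observed at its potential
jump epochs: `arrival n = true` means the `n`-th epoch is an arrival (shared by the
coupled systems); otherwise it is a potential departure of the common Poisson process.
An arriving customer joins iff the queue length is strictly below the static
threshold `K`; at a potential departure a nonempty queue loses one customer. -/
def queueLen (arrival : ℕ → Bool) (K : ℕ) (q0 : ℕ) : ℕ → ℕ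
  | 0 => q0
  | n + 1 =>
    let q := queueLen arrival K q0 n
    if arrival n then (if q < K then q + 1 else q) else q - 1

lemma queueLen_inv (arrival : ℕ → Bool) (KG KL : ℕ) (q : ℕ)
    (hK : KL ≤ KG) (hq : q ≤ KL) : ∀ n : ℕ,
    queueLen arrival KL q n ≤ queueLen arrival KG q n ∧
    queueLen arrival KG q n ≤ KG ∧
    queueLen arrival KL q n ≤ KL ∧
    queueLen arrival KG q n ≤ queueLen arrival KL q n + (KG - KL) := by
  intro n
  induction n with
  | zero => simp [queueLen]; omega
  | succ n ih =>
    obtain ⟨h1, h2, h3, h4⟩ := ih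
    simp only [queueLen]
    cases arrival n <;> simp only [Bool.false_eq_true, if_true, if_false] <;> first | (split_ifs <;> omega) | omega

/-- For coupled systems with static thresholds `K^G ≥ K^L` and common initial queue
length `q ≤ K^L`, the queue-length difference never exceeds `K^G − K^L`; consequently,
every customer admitted to system `L` is also admitted to system `G`. -/
theorem stmt_7 (arrival : ℕ → Bool) (KG KL : ℕ) (q : ℕ)
    (hK : KL ≤ KG) (hq : q ≤ KL) :
    (∀ n : ℕ,
      (queueLen arrival KG q n : ℤ) - queueLen arrival KL q n ≤ (KG : ℤ) - KL) ∧
    (∀ n : ℕ, arrival n → queueLen arrival KL q n < KL →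
      queueLen arrival KG q n < KG) := by
  constructor
  · intro n
    obtain ⟨_, _, _, h4⟩ := queueLen_inv arrival KG KL q hK hq n
    omega
  · intro n _ hlt
    obtain ⟨_, _, _, h4⟩ := queueLen_inv arrival KG KL q hK hq n
    omega
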